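/- arXiv:hep-th/9408143 — 4 statements merged into one kernel-verified Lean document; each statement's English description precedes it below -/
import Mathlib

section
/- For 0 < q < 1, Re(z) > 0 and Re(s) > 0, the q-Hurwitz zeta function ζ(s,z:q) = Σ_{k=0}^∞ q^{s(k+1)} / [k+z]_q^s satisfies the identity ζ(s,z:q) = (q - q²)^s · Σ_{r=0}^∞ ((s)_r / r!) · q^{rz} / (1 - q^{r+s}), where (s)_r = s(s+1)···(s+r-1) is the Pochhammer symbol and [x]_q = (1-q^x)/(1-q). -/
/-!
Since `[k + z]_q = (1 - q^z q^k) / (1 - q)`, the `k`-th term of the q-Hurwitz series is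
`(q - q²)^s (q^s)^k (1 - q^z q^k)^(-s)`. Expanding `(1 - w)^(-s) = Σ_r (s)_r / r! w^r` by the
binomial series, the double series `Σ_k Σ_r (s)_r / r! q^{rz} (q^{r+s})^k` converges absolutely
because `‖q^z‖, ‖q^s‖ < 1`; summing it over `k` first instead is a geometric series in `q^{r+s}`.
-/

open Complex

/-- The q-bracket `[x]_q = (1 - q^x)/(1 - q)` as a complex number, `0 < q < 1`. -/
noncomputable def qBracket (q : ℝ) (x : ℂ) : ℂ := (1 - (q : ℂ) ^ x) / (1 - (q : ℂ))

open scoped Nat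

lemma ascPochhammer_eval_div_factorial_eq_choose (s : ℂ) (n : ℕ) :
    (ascPochhammer ℂ n).eval s / n ! = Ring.choose (s + n - 1) n := by
  rw [← Ring.multichoose_eq, div_eq_iff (Nat.cast_ne_zero.mpr n.factorial_ne_zero), mul_comm,
    ← nsmul_eq_mul, Ring.factorial_nsmul_multichoose_eq_ascPochhammer,
    Polynomial.ascPochhammer_smeval_eq_eval]

lemma hasFPowerSeriesOnBall_one_sub_cpow_neg (s : ℂ) :
    HasFPowerSeriesOnBall (fun w ↦ (1 - w) ^ (-s))
      (.ofScalars ℂ fun n ↦ (ascPochhammer ℂ n).eval s / n !) 0 1 := by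
  simpa only [ascPochhammer_eval_div_factorial_eq_choose, one_div, ← cpow_neg] using
    one_div_one_sub_cpow_hasFPowerSeriesOnBall_zero s

lemma hasSum_ascPochhammer_div_factorial_mul_pow (s : ℂ) {w : ℂ} (hw : ‖w‖ < 1) :
    HasSum (fun n ↦ (ascPochhammer ℂ n).eval s / n ! * w ^ n) ((1 - w) ^ (-s)) := by
  have hw' : w ∈ Metric.eball (0 : ℂ) 1 := by
    rwa [mem_eball_zero_iff, ← ofReal_norm, ENNReal.ofReal_lt_one]
  simpa [FormalMultilinearSeries.ofScalars_apply_eq, mul_comm] using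
    (hasFPowerSeriesOnBall_one_sub_cpow_neg s).hasSum hw'

lemma summable_norm_ascPochhammer_div_factorial_mul_pow (s : ℂ) {x : ℝ} (hx₀ : 0 ≤ x)
    (hx₁ : x < 1) :
    Summable (fun n ↦ ‖(ascPochhammer ℂ n).eval s / (n ! : ℂ)‖ * x ^ n) := by
  have h := FormalMultilinearSeries.summable_norm_mul_pow _ (r := ⟨x, hx₀⟩)
    ((ENNReal.coe_lt_one_iff.mpr hx₁).trans_le (hasFPowerSeriesOnBall_one_sub_cpow_neg s).r_le)
  simp only [FormalMultilinearSeries.ofScalars_norm] at h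
  exact h

theorem tsum_pow_mul_one_sub_mul_pow_cpow_neg (s : ℂ) {w t ρ : ℂ} (hw : ‖w‖ < 1) (ht : ‖t‖ < 1)
    (hρ : ‖ρ‖ ≤ 1) :
    ∑' k : ℕ, t ^ k * (1 - w * ρ ^ k) ^ (-s) =
      ∑' n : ℕ, (ascPochhammer ℂ n).eval s / n ! * w ^ n / (1 - t * ρ ^ n) := by
  set a : ℕ → ℂ := fun n ↦ (ascPochhammer ℂ n).eval s / (n ! : ℂ)
  set f : ℕ → ℕ → ℂ := fun k n ↦ a n * w ^ n * (t * ρ ^ n) ^ k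
  have norm_mul_pow_le (x : ℂ) (m : ℕ) : ‖x * ρ ^ m‖ ≤ ‖x‖ := by
    rw [norm_mul, norm_pow]
    exact mul_le_of_le_one_right (norm_nonneg x) (pow_le_one₀ (norm_nonneg ρ) hρ)
  have hrow (k : ℕ) : HasSum (f k) (t ^ k * (1 - w * ρ ^ k) ^ (-s)) := by
    have h := (hasSum_ascPochhammer_div_factorial_mul_pow s
      ((norm_mul_pow_le w k).trans_lt hw)).mul_left (t ^ k)
    rwa [show f k = fun n ↦ t ^ k * (a n * (w * ρ ^ k) ^ n) from funext fun n ↦ by ring]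
  have hcol (n : ℕ) : HasSum (fun k ↦ f k n) (a n * w ^ n / (1 - t * ρ ^ n)) := by
    simpa only [div_eq_mul_inv] using (hasSum_geometric_of_norm_lt_one
      ((norm_mul_pow_le t n).trans_lt ht)).mul_left (a n * w ^ n)
  have hf : Summable (Function.uncurry f) := by
    refine .of_norm_bounded ((summable_geometric_of_lt_one (norm_nonneg t) ht).mul_of_nonneg
      (summable_norm_ascPochhammer_div_factorial_mul_pow s (norm_nonneg w) hw)
      (fun _ ↦ by positivity) (fun _ ↦ by positivity)) ?_
    rintro ⟨k, n⟩
    rw [Function.uncurry_apply_pair, norm_mul, norm_mul, norm_pow, norm_pow (t * ρ ^ n)]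
    calc ‖a n‖ * ‖w‖ ^ n * ‖t * ρ ^ n‖ ^ k ≤ ‖a n‖ * ‖w‖ ^ n * ‖t‖ ^ k := by
          gcongr; exact norm_mul_pow_le t n
      _ = ‖t‖ ^ k * (‖a n‖ * ‖w‖ ^ n) := by ring
  calc ∑' k : ℕ, t ^ k * (1 - w * ρ ^ k) ^ (-s) = ∑' k, ∑' n, f k n :=
        tsum_congr fun k ↦ (hrow k).tsum_eq.symm
    _ = ∑' n, ∑' k, f k n :=
        (hf.tsum_comm' (fun k ↦ (hrow k).summable) fun n ↦ (hcol n).summable).symm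
    _ = _ := tsum_congr fun n ↦ (hcol n).tsum_eq

lemma div_ofReal_cpow (x : ℂ) {c : ℝ} (hc : 0 < c) (s : ℂ) :
    (x / c) ^ s = x ^ s / (c : ℂ) ^ s := by
  rcases eq_or_ne x 0 with rfl | hx
  · rcases eq_or_ne s 0 with rfl | hs <;> simp [*]
  have hc' : (c : ℂ) ≠ 0 := ofReal_ne_zero.mpr hc.ne'
  rw [cpow_def_of_ne_zero (div_ne_zero hx hc'), cpow_def_of_ne_zero hx, cpow_def_of_ne_zero hc',
    ← exp_sub, div_eq_inv_mul, ← ofReal_inv, log_ofReal_mul (inv_pos.2 hc) hx, Real.log_inv,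
    ofReal_neg, ofReal_log hc.le]
  ring_nf

lemma norm_ofReal_cpow_lt_one {q : ℝ} (hq₀ : 0 < q) (hq₁ : q < 1) {z : ℂ} (hz : 0 < z.re) :
    ‖(q : ℂ) ^ z‖ < 1 := by
  rw [norm_cpow_eq_rpow_re_of_pos hq₀]
  exact Real.rpow_lt_one hq₀.le hq₁ hz

lemma cpow_mul_succ_div_qBracket_cpow {q : ℝ} (hq₀ : 0 < q) (hq₁ : q < 1) (z s : ℂ) (k : ℕ) :
    (q : ℂ) ^ (s * (k + 1)) / qBracket q (k + z) ^ s =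
      ((q : ℂ) - (q : ℂ) ^ 2) ^ s *
        (((q : ℂ) ^ s) ^ k * (1 - (q : ℂ) ^ z * (q : ℂ) ^ k) ^ (-s)) := by
  have hq : (q : ℂ) ≠ 0 := ofReal_ne_zero.mpr hq₀.ne'
  have hbracket : qBracket q (k + z) = (1 - (q : ℂ) ^ z * (q : ℂ) ^ k) / ((1 - q : ℝ) : ℂ) := by
    rw [qBracket, cpow_add _ _ hq, cpow_natCast, ofReal_sub, ofReal_one, mul_comm]
  have hfactor : (q : ℂ) - (q : ℂ) ^ 2 = (q : ℂ) * ((1 - q : ℝ) : ℂ) := by push_cast; ring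
  rw [hbracket, div_ofReal_cpow _ (sub_pos.2 hq₁), hfactor,
    mul_cpow_ofReal_nonneg hq₀.le (sub_pos.2 hq₁).le, div_div_eq_mul_div, cpow_neg,
    show s * (k + 1) = s * ((k + 1 : ℕ) : ℂ) by push_cast; rfl, cpow_mul_nat, pow_succ]
  ring

/-- For `0 < q < 1`, `Re z > 0`, `Re s > 0`, the q-Hurwitz zeta series equals
`(q - q²)^s · Σ_r ((s)_r / r!) q^{rz} / (1 - q^{r+s})`. -/
theorem qHurwitz_binomial_expansion (q : ℝ) (hq0 : 0 < q) (hq1 : q < 1)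
    (z : ℂ) (hz : 0 < z.re) (s : ℂ) (hs : 0 < s.re) :
    (∑' k : ℕ, (q : ℂ) ^ (s * (k + 1)) / (qBracket q (k + z)) ^ s) =
      ((q : ℂ) - (q : ℂ) ^ 2) ^ s *
        ∑' r : ℕ, (Polynomial.eval s (ascPochhammer ℂ r) / (r.factorial : ℂ)) *
          (q : ℂ) ^ ((r : ℂ) * z) / (1 - (q : ℂ) ^ ((r : ℂ) + s)) := by
  have hq : (q : ℂ) ≠ 0 := ofReal_ne_zero.mpr hq0.ne'
  have hq_norm : ‖(q : ℂ)‖ ≤ 1 := by rw [norm_real, Real.norm_of_nonneg hq0.le]; exact hq1.le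
  rw [tsum_congr (cpow_mul_succ_div_qBracket_cpow hq0 hq1 z s), tsum_mul_left,
    tsum_pow_mul_one_sub_mul_pow_cpow_neg s (norm_ofReal_cpow_lt_one hq0 hq1 hz)
      (norm_ofReal_cpow_lt_one hq0 hq1 hs) hq_norm]
  congr 1
  refine tsum_congr fun r ↦ ?_
  rw [cpow_nat_mul, cpow_add _ _ hq, cpow_natCast, mul_comm ((q : ℂ) ^ s)]
end

section
/- For 0 < q < 1 and Re(z) > 0, the series Σ_{k=0}^∞ q^{s(k+1)} / [k+z]_q^s converges absolutely for every complex s with Re(s) > 0, and defines a holomorphic function of s on the right half-plane {s : Re(s) > 0}. -/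
/-!
Since `q > 0`, `‖q ^ (s (k + 1))‖ = (q ^ Re s) ^ (k + 1)`, and since `q ^ Re (k + z) ≤ q ^ Re z < 1`,
the brackets satisfy `‖[k + z]_q‖ ≥ (1 - q ^ Re z) / (1 - q) > 0` for every `k`. Together with
`‖d ^ s‖ ≥ ‖d‖ ^ Re s * exp (-π |Im s|)`, this dominates the terms by `C (q ^ a) ^ (k + 1)`,
uniformly for `a ≤ Re s` and `‖s‖ ≤ R`. Absolute convergence follows, and holomorphy follows
from the Weierstrass theorem on locally uniform limits of holomorphic functions.
-/

open Complex

lemma div_exp_le_norm_cpow {d s : ℂ} {m R : ℝ} (hm0 : 0 < m) (hm1 : m ≤ 1) (hmd : m ≤ ‖d‖)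
    (hs : 0 ≤ s.re) (hsR : ‖s‖ ≤ R) : m ^ R / Real.exp (Real.pi * R) ≤ ‖d ^ s‖ := by
  have hd : d ≠ 0 := norm_pos_iff.mp (hm0.trans_le hmd)
  rw [norm_cpow_of_ne_zero hd]
  have hpow : m ^ R ≤ ‖d‖ ^ s.re :=
    calc m ^ R ≤ m ^ s.re :=
          Real.rpow_le_rpow_of_exponent_ge hm0 hm1 ((re_le_norm s).trans hsR)
      _ ≤ ‖d‖ ^ s.re := Real.rpow_le_rpow hm0.le hmd hs
  have hexp : Real.exp (arg d * s.im) ≤ Real.exp (Real.pi * R) := Real.exp_le_exp.mpr <|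
    calc arg d * s.im ≤ |arg d| * |s.im| := (le_abs_self _).trans (abs_mul _ _).le
      _ ≤ Real.pi * R := mul_le_mul (abs_arg_le_pi d) ((abs_im_le_norm s).trans hsR)
          (abs_nonneg _) Real.pi_pos.le
  gcongr

noncomputable def qHurwitzTerm (q : ℝ) (z s : ℂ) (k : ℕ) : ℂ :=
  (q : ℂ) ^ (s * (k + 1)) / qBracket q (k + z) ^ s

section

variable {q : ℝ} {z : ℂ}

lemma one_sub_rpow_re_div_le_norm_qBracket (hq0 : 0 < q) (hq1 : q < 1) (x : ℂ) :
    (1 - q ^ x.re) / (1 - q) ≤ ‖qBracket q x‖ := by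
  have hden : ‖1 - (q : ℂ)‖ = 1 - q := by
    rw [← ofReal_one, ← ofReal_sub, norm_real, Real.norm_of_nonneg (by linarith)]
  have hnum : 1 - q ^ x.re ≤ ‖1 - (q : ℂ) ^ x‖ := by
    simpa [norm_cpow_eq_rpow_re_of_pos hq0] using norm_sub_norm_le (1 : ℂ) ((q : ℂ) ^ x)
  rw [qBracket, norm_div, hden]
  gcongr

lemma exists_pos_le_norm_qBracket_natCast_add (hq0 : 0 < q) (hq1 : q < 1)
    (hz : 0 < z.re) : ∃ m : ℝ, 0 < m ∧ m ≤ 1 ∧ ∀ k : ℕ, m ≤ ‖qBracket q (k + z)‖ := by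
  have hqz : q ^ z.re < 1 := Real.rpow_lt_one hq0.le hq1 hz
  refine ⟨min ((1 - q ^ z.re) / (1 - q)) 1, lt_min (div_pos (by linarith) (by linarith)) one_pos,
    min_le_right _ _, fun k => (min_le_left _ _).trans ?_⟩
  refine le_trans ?_ (one_sub_rpow_re_div_le_norm_qBracket hq0 hq1 _)
  have hk : z.re ≤ ((k : ℂ) + z).re := by simp
  exact div_le_div_of_nonneg_right
    (sub_le_sub_left (Real.rpow_le_rpow_of_exponent_ge hq0 hq1.le hk) 1) (by linarith)

lemma norm_ofReal_cpow_mul_natCast_add_one (hq0 : 0 < q) (s : ℂ) (k : ℕ) :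
    ‖(q : ℂ) ^ (s * (k + 1))‖ = (q ^ s.re) ^ (k + 1) := by
  rw [norm_cpow_eq_rpow_re_of_pos hq0, ← Real.rpow_mul_natCast hq0.le]
  push_cast
  simp

lemma exists_norm_qHurwitzTerm_le (hq0 : 0 < q) (hq1 : q < 1) (hz : 0 < z.re)
    {a : ℝ} (ha : 0 < a) (R : ℝ) :
    ∃ C : ℝ, ∀ (s : ℂ) (k : ℕ), a ≤ s.re → ‖s‖ ≤ R →
      ‖qHurwitzTerm q z s k‖ ≤ C * (q ^ a) ^ (k + 1) := by
  obtain ⟨m, hm0, hm1, hmz⟩ := exists_pos_le_norm_qBracket_natCast_add hq0 hq1 hz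
  refine ⟨Real.exp (Real.pi * R) / m ^ R, fun s k hsa hsR => ?_⟩
  have hden := div_exp_le_norm_cpow hm0 hm1 (hmz k) (ha.le.trans hsa) hsR
  have hnum : ‖(q : ℂ) ^ (s * (k + 1))‖ ≤ (q ^ a) ^ (k + 1) := by
    rw [norm_ofReal_cpow_mul_natCast_add_one hq0]
    exact pow_le_pow_left₀ (by positivity) (Real.rpow_le_rpow_of_exponent_ge hq0 hq1.le hsa) _
  rw [qHurwitzTerm, norm_div]
  calc ‖(q : ℂ) ^ (s * (k + 1))‖ / ‖qBracket q (k + z) ^ s‖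
      ≤ (q ^ a) ^ (k + 1) / (m ^ R / Real.exp (Real.pi * R)) := by gcongr
    _ = Real.exp (Real.pi * R) / m ^ R * (q ^ a) ^ (k + 1) := by field_simp

lemma summable_const_mul_rpow_pow_succ {q a : ℝ} (hq0 : 0 < q) (hq1 : q < 1) (ha : 0 < a) (C : ℝ) :
    Summable fun k : ℕ => C * (q ^ a) ^ (k + 1) :=
  ((summable_nat_add_iff 1).mpr
    (summable_geometric_of_lt_one (by positivity) (Real.rpow_lt_one hq0.le hq1 ha))).mul_left C

lemma differentiable_qHurwitzTerm (hq0 : 0 < q) (hq1 : q < 1) (hz : 0 < z.re)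
    (k : ℕ) : Differentiable ℂ fun s => qHurwitzTerm q z s k := by
  obtain ⟨m, hm0, -, hmz⟩ := exists_pos_le_norm_qBracket_natCast_add hq0 hq1 hz
  have hd : qBracket q (k + z) ≠ 0 := norm_pos_iff.mp (hm0.trans_le (hmz k))
  refine Differentiable.div ?_ (differentiable_id.const_cpow (.inl hd))
    fun s => cpow_ne_zero_iff.mpr (.inl hd)
  exact (differentiable_id.mul_const _).const_cpow (.inl (ofReal_ne_zero.mpr hq0.ne'))

lemma differentiableAt_tsum_qHurwitzTerm (hq0 : 0 < q) (hq1 : q < 1)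
    (hz : 0 < z.re) {s₀ : ℂ} (hs₀ : 0 < s₀.re) :
    DifferentiableAt ℂ (fun s => ∑' k, qHurwitzTerm q z s k) s₀ := by
  set U : Set ℂ := {s | s₀.re / 2 < s.re} ∩ Metric.ball 0 (‖s₀‖ + 1)
  have hU : IsOpen U := (isOpen_lt continuous_const continuous_re).inter Metric.isOpen_ball
  have hs₀U : s₀ ∈ U :=
    ⟨show s₀.re / 2 < s₀.re from half_lt_self hs₀, mem_ball_zero_iff.mpr (lt_add_one _)⟩
  obtain ⟨C, hC⟩ := exists_norm_qHurwitzTerm_le hq0 hq1 hz (half_pos hs₀) (‖s₀‖ + 1)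
  refine (differentiableOn_tsum_of_summable_norm
    (summable_const_mul_rpow_pow_succ hq0 hq1 (half_pos hs₀) C)
    (fun k => (differentiable_qHurwitzTerm hq0 hq1 hz k).differentiableOn) hU ?_).differentiableAt
    (hU.mem_nhds hs₀U)
  rintro k s ⟨hsa, hsR⟩
  exact hC s k hsa.le (mem_ball_zero_iff.mp hsR).le

end

/-- the q-Hurwitz series converges absolutely for `Re s > 0` and defines a
holomorphic function of `s` on the right half-plane. -/
theorem qHurwitz_summable_and_holomorphic (q : ℝ) (hq0 : 0 < q) (hq1 : q < 1)
    (z : ℂ) (hz : 0 < z.re) :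
    (∀ s : ℂ, 0 < s.re →
        Summable (fun k : ℕ => ‖(q : ℂ) ^ (s * (k + 1)) / (qBracket q (k + z)) ^ s‖)) ∧
      DifferentiableOn ℂ
        (fun s : ℂ => ∑' k : ℕ, (q : ℂ) ^ (s * (k + 1)) / (qBracket q (k + z)) ^ s)
        {s : ℂ | 0 < s.re} := by
  refine ⟨fun s hs => ?_, fun s hs =>
    (differentiableAt_tsum_qHurwitzTerm hq0 hq1 hz hs).differentiableWithinAt⟩
  obtain ⟨C, hC⟩ := exists_norm_qHurwitzTerm_le hq0 hq1 hz hs ‖s‖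
  exact (summable_const_mul_rpow_pow_succ hq0 hq1 hs C).of_nonneg_of_le (fun k => norm_nonneg _)
    fun k => hC s k le_rfl le_rfl
end

section
/- With f(t) = q^{s(t+1)}/(1 - q^{t+z})^s for 0 < q < 1, Re(z) > 0, the k-th derivative of f with respect to t is f^{(k)}(t) = q^{s(t+1)} · s·P_k(q^{t+z}; s)/(1 - q^{t+z})^{s+k} · (log q)^k for all k ≥ 0, where P_k(x;s) are the polynomials defined by P_0(x;s) = 1/s, P_1(x;s) = 1, P_{k+1}(x;s) = (x - x²)∂_x P_k(x;s) + (kx + s)P_k(x;s). -/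
open MvPolynomial Complex

/-- The polynomials `P_k(x;s)` (for `k ≥ 1`): `P₁ = 1`,
`P_{k+1} = (x - x²) ∂ₓ P_k + (k x + s) P_k`, with `X 0 = x`, `X 1 = s`.
(`P 0` is set to `0`; the genuine `P_0 = 1/s` satisfies `s·P_0 = 1`.) -/
noncomputable def Puq : ℕ → MvPolynomial (Fin 2) ℤ
  | 0 => 0
  | 1 => 1
  | (k + 2) =>
      (X 0 - X 0 ^ 2) * pderiv 0 (Puq (k + 1)) +
        (((k + 1 : ℕ) : MvPolynomial (Fin 2) ℤ) * X 0 + X 1) * Puq (k + 1)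

/-- `s · P_k(x;s)`, with the convention `s · P_0 = 1`. -/
noncomputable def sPuq (k : ℕ) (x s : ℂ) : ℂ :=
  if k = 0 then 1 else s * aeval ![x, s] (Puq k)

/-!
With `L = log q`, `a t = q^{s(t+1)}` and `w t = q^{t+z}` we have `a' = L s a` and `w' = L w`.
Differentiating `a · sP_k(w) · (1 - w)^{-(s+k)}` therefore gives `L · a · (1 - w)^{-(s+k+1)}` times
`(w - w²) (sP_k)'(w) + (k w + s) sP_k(w) = sP_{k+1}(w)`, and the formula follows by induction on `k`.
For `t > -Re z` we have `‖w t‖ < 1`, so `1 - w t` stays in the right half-plane, where the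
principal power is holomorphic.
-/

open Set

namespace MvPolynomial

variable {R A : Type*} [CommRing R] [CommRing A] [Algebra R A]

theorem aeval_vecCons_eq_eval (P : MvPolynomial (Fin 2) R) (x s : A) :
    aeval ![x, s] P = (aeval ![Polynomial.X, Polynomial.C s] P).eval x := by
  induction P using MvPolynomial.induction_on with
  | C a => simp
  | add p q hp hq => simp [hp, hq]
  | mul_X p i hp => fin_cases i <;> simp [hp]

theorem derivative_aeval_X_C (P : MvPolynomial (Fin 2) R) (s : A) :
    Polynomial.derivative (aeval ![Polynomial.X, Polynomial.C s] P) =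
      aeval ![Polynomial.X, Polynomial.C s] (pderiv 0 P) := by
  induction P using MvPolynomial.induction_on with
  | C a => simp
  | add p q hp hq => simp [hp, hq]
  | mul_X p i hp => fin_cases i <;> simp [hp, mul_comm]

theorem hasDerivAt_aeval_vecCons {𝕜 : Type*} [NontriviallyNormedField 𝕜] [Algebra R 𝕜]
    (P : MvPolynomial (Fin 2) R) (x s : 𝕜) :
    HasDerivAt (fun y => aeval ![y, s] P) (aeval ![x, s] (pderiv 0 P)) x := by
  have hpoly : (fun y => aeval ![y, s] P) =
      fun y => (aeval ![Polynomial.X, Polynomial.C s] P).eval y := by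
    ext y
    exact aeval_vecCons_eq_eval P y s
  rw [hpoly, aeval_vecCons_eq_eval (pderiv 0 P) x s, ← derivative_aeval_X_C]
  exact Polynomial.hasDerivAt _ x

end MvPolynomial

theorem differentiable_sPuq (k : ℕ) (s : ℂ) : Differentiable ℂ (sPuq k · s) := by
  rcases eq_or_ne k 0 with rfl | hk
  · simp [sPuq]
  · simp only [sPuq, if_neg hk]
    exact fun x => ((hasDerivAt_aeval_vecCons _ x s).const_mul s).differentiableAt

theorem sPuq_succ (k : ℕ) (x s : ℂ) :
    sPuq (k + 1) x s = (x - x ^ 2) * deriv (sPuq k · s) x + (k * x + s) * sPuq k x s := by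
  cases k with
  | zero => simp [sPuq, Puq]
  | succ k =>
    simp only [sPuq, add_eq_zero, one_ne_zero, and_false, if_false]
    rw [((hasDerivAt_aeval_vecCons _ x s).const_mul s).deriv, Puq]
    simp only [map_add, map_mul, map_sub, map_pow, aeval_X, map_natCast,
      Matrix.cons_val_zero, Matrix.cons_val_one]
    push_cast
    ring

section Recursion

variable {a w : ℝ → ℂ} {L s : ℂ}

theorem hasDerivAt_mul_sPuq_mul_one_sub_cpow (k : ℕ) {u : ℝ}
    (ha : HasDerivAt a (L * s * a u) u) (hw : HasDerivAt w (L * w u) u)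
    (hslit : 1 - w u ∈ slitPlane) :
    HasDerivAt (fun t => a t * sPuq k (w t) s * (1 - w t) ^ (-(s + k)))
      (a u * sPuq (k + 1) (w u) s * (1 - w u) ^ (-(s + (k + 1 : ℕ))) * L) u := by
  have hP := ((differentiable_sPuq k s) (w u)).hasDerivAt.comp u hw
  have hC := (Complex.hasStrictDerivAt_cpow_const (c := -(s + k)) hslit).hasDerivAt.comp u
    (hw.const_sub 1)
  refine ((ha.mul hP).mul hC).congr_deriv ?_
  have hsplit : (1 - w u) ^ (-(s + k)) = (1 - w u) ^ (-(s + (k + 1 : ℕ))) * (1 - w u) := by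
    have h := cpow_add (-(s + (k + 1 : ℕ))) 1 (slitPlane_ne_zero hslit)
    rw [cpow_one] at h
    rw [← h]
    push_cast
    ring_nf
  simp only [Function.comp_apply, Pi.mul_apply]
  rw [sPuq_succ, hsplit, show -(s + k) - 1 = -(s + (k + 1 : ℕ)) by push_cast; ring]
  ring

theorem eqOn_iteratedDeriv_mul_one_sub_cpow {U : Set ℝ} (hU : IsOpen U)
    (ha : ∀ u ∈ U, HasDerivAt a (L * s * a u) u) (hw : ∀ u ∈ U, HasDerivAt w (L * w u) u)
    (hslit : ∀ u ∈ U, 1 - w u ∈ slitPlane) (k : ℕ) :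
    EqOn (iteratedDeriv k fun t => a t * (1 - w t) ^ (-s))
      (fun t => a t * sPuq k (w t) s * (1 - w t) ^ (-(s + k)) * L ^ k) U := by
  induction k with
  | zero => intro u _; simp [sPuq]
  | succ k ih =>
    intro u hu
    rw [iteratedDeriv_succ, (ih.eventuallyEq_of_mem (hU.mem_nhds hu)).deriv_eq,
      ((hasDerivAt_mul_sPuq_mul_one_sub_cpow k (ha u hu) (hw u hu) (hslit u hu)).mul_const
        (L ^ k)).deriv]
    ring

end Recursion

section QPower

variable {q : ℝ}

theorem hasDerivAt_ofReal_cpow_mul_add (hq : 0 < q) (c d : ℂ) (u : ℝ) :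
    HasDerivAt (fun t : ℝ => (q : ℂ) ^ (c * (t + d)))
      (Real.log q * c * (q : ℂ) ^ (c * (u + d))) u := by
  have hq' : (q : ℂ) ≠ 0 := ofReal_ne_zero.mpr hq.ne'
  refine ((((hasDerivAt_id (u : ℂ)).add_const d).const_mul c).const_cpow
    (Or.inl hq')).comp_ofReal.congr_deriv ?_
  rw [ofReal_log hq.le, id, mul_one]
  ring

theorem one_sub_ofReal_cpow_mem_slitPlane (hq0 : 0 < q) (hq1 : q < 1) {w : ℂ} (hw : 0 < w.re) :
    1 - (q : ℂ) ^ w ∈ slitPlane := by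
  rw [sub_eq_add_neg]
  apply mem_slitPlane_of_norm_lt_one
  rw [norm_neg, norm_cpow_eq_rpow_re_of_pos hq0]
  exact Real.rpow_lt_one hq0.le hq1 hw

end QPower

/-- the k-th derivative of `f(t) = q^{s(t+1)} (1-q^{t+z})^{-s}` is
`q^{s(t+1)} · s P_k(q^{t+z};s) / (1-q^{t+z})^{s+k} · (log q)^k`. -/
theorem iteratedDeriv_qHurwitz_integrand (q : ℝ) (hq0 : 0 < q) (hq1 : q < 1)
    (z s : ℂ) (hz : 0 < z.re) (k : ℕ) (t : ℝ) (ht : 0 ≤ t) :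
    iteratedDeriv k
        (fun u : ℝ => (q : ℂ) ^ (s * ((u : ℂ) + 1)) * (1 - (q : ℂ) ^ ((u : ℂ) + z)) ^ (-s)) t =
      (q : ℂ) ^ (s * ((t : ℂ) + 1)) * sPuq k ((q : ℂ) ^ ((t : ℂ) + z)) s /
        (1 - (q : ℂ) ^ ((t : ℂ) + z)) ^ (s + k) * (Real.log q : ℂ) ^ k := by
  have hw (u : ℝ) : HasDerivAt (fun t : ℝ => (q : ℂ) ^ ((t : ℂ) + z))
      (Real.log q * (q : ℂ) ^ ((u : ℂ) + z)) u := by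
    simpa using hasDerivAt_ofReal_cpow_mul_add hq0 1 z u
  have hslit (u : ℝ) (hu : u ∈ Ioi (-z.re)) : 1 - (q : ℂ) ^ ((u : ℂ) + z) ∈ slitPlane :=
    one_sub_ofReal_cpow_mem_slitPlane hq0 hq1 (by simpa [neg_lt_iff_pos_add] using hu)
  rw [eqOn_iteratedDeriv_mul_one_sub_cpow isOpen_Ioi
    (fun u _ => hasDerivAt_ofReal_cpow_mul_add hq0 s 1 u) (fun u _ => hw u) hslit k
    (show t ∈ Ioi (-z.re) by simp only [mem_Ioi]; linarith)]
  simp only [cpow_neg, div_eq_mul_inv]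
end

section
/- For Re(β) > 0 and Re(γ - β) > 0 and |x| < 1, the Gauss hypergeometric function satisfies F(α,β,γ;x) = (Γ(γ)/(Γ(β)Γ(γ-β))) ∫_0^1 u^{β-1} (1-u)^{γ-β-1} (1-xu)^{-α} du. -/
/-!
Expand `(1 - x u) ^ (-α) = ∑ (α)ₙ / n! · xⁿ uⁿ` by the binomial series. Since `|u| ≤ 1` and the
coefficients are absolutely summable for `|x| < 1`, the series can be integrated termwise against
the Beta weight `u ^ (β - 1) (1 - u) ^ (γ - β - 1)`, which produces the Beta integrals
`B(β + n, γ - β) = (β)ₙ / (γ)ₙ · B(β, γ - β)`; finally `B(β, γ - β) = Γ(β) Γ(γ - β) / Γ(γ)`.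
-/

open Complex MeasureTheory

/-- The Gauss hypergeometric function `₂F₁(α,β;γ;x)` as a power series. -/
noncomputable def gaussHyp (α β γ x : ℂ) : ℂ :=
  ∑' n : ℕ, (Polynomial.eval α (ascPochhammer ℂ n) * Polynomial.eval β (ascPochhammer ℂ n) /
    (Polynomial.eval γ (ascPochhammer ℂ n) * (n.factorial : ℂ))) * x ^ n

open scoped Nat

theorem integral_mul_tsum_mul_pow {α : Type*} [MeasurableSpace α] {μ : Measure α} {w f : α → ℂ}
    (hw : Integrable w μ) (hf : AEStronglyMeasurable f μ) (hf_le : ∀ᵐ x ∂μ, ‖f x‖ ≤ 1)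
    {c : ℕ → ℂ} (hc : Summable fun n ↦ ‖c n‖) :
    ∫ x, w x * ∑' n, c n * f x ^ n ∂μ = ∑' n, c n * ∫ x, w x * f x ^ n ∂μ := by
  have hint (n : ℕ) : Integrable (fun x ↦ c n * (w x * f x ^ n)) μ := by
    refine (hw.mul_bdd (hf.pow n) (c := 1) ?_).const_mul (c n)
    filter_upwards [hf_le] with x hx
    simpa using pow_le_one₀ (norm_nonneg _) hx
  have hbound (n : ℕ) : ∫ x, ‖c n * (w x * f x ^ n)‖ ∂μ ≤ ‖c n‖ * ∫ x, ‖w x‖ ∂μ := by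
    rw [← integral_const_mul]
    refine integral_mono_ae (hint n).norm (hw.norm.const_mul _) ?_
    filter_upwards [hf_le] with x hx
    simpa [mul_assoc] using mul_le_mul_of_nonneg_left
      (mul_le_of_le_one_right (norm_nonneg (w x)) (pow_le_one₀ (norm_nonneg _) hx))
      (norm_nonneg (c n))
  have hsum : Summable fun n ↦ ∫ x, ‖c n * (w x * f x ^ n)‖ ∂μ :=
    (hc.mul_right _).of_nonneg_of_le (fun n ↦ integral_nonneg fun _ ↦ norm_nonneg _) hbound
  calc ∫ x, w x * ∑' n, c n * f x ^ n ∂μ = ∫ x, ∑' n, c n * (w x * f x ^ n) ∂μ := by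
        simp_rw [← tsum_mul_left, mul_left_comm]
    _ = ∑' n, c n * ∫ x, w x * f x ^ n ∂μ := by
        simp_rw [← integral_tsum_of_summable_integral_norm hint hsum, integral_const_mul]

namespace Complex

theorem ascPochhammer_eval_div_factorial_eq_choose (a : ℂ) (n : ℕ) :
    (ascPochhammer ℂ n).eval a / n ! = Ring.choose (a + n - 1) n := by
  rw [← Ring.multichoose_eq, ← Polynomial.ascPochhammer_smeval_eq_eval,
    ← Ring.factorial_nsmul_multichoose_eq_ascPochhammer, nsmul_eq_mul,
    mul_div_cancel_left₀ _ (by exact_mod_cast n.factorial_ne_zero)]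

theorem hasFPowerSeriesOnBall_one_sub_cpow_neg (a : ℂ) :
    HasFPowerSeriesOnBall (fun z ↦ (1 - z) ^ (-a))
      (.ofScalars ℂ fun n ↦ (ascPochhammer ℂ n).eval a / n !) 0 1 := by
  simpa [ascPochhammer_eval_div_factorial_eq_choose, cpow_neg] using
    one_div_one_sub_cpow_hasFPowerSeriesOnBall_zero a

theorem hasSum_ascPochhammer_mul_pow (a : ℂ) {z : ℂ} (hz : ‖z‖ < 1) :
    HasSum (fun n ↦ (ascPochhammer ℂ n).eval a / n ! * z ^ n) ((1 - z) ^ (-a)) := by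
  simpa [mul_comm] using (hasFPowerSeriesOnBall_one_sub_cpow_neg a).hasSum (y := z)
    (by simpa [← ofReal_norm] using hz)

theorem summable_norm_ascPochhammer_mul_pow (a : ℂ) {z : ℂ} (hz : ‖z‖ < 1) :
    Summable fun n ↦ ‖(ascPochhammer ℂ n).eval a / n ! * z ^ n‖ := by
  have hp := hasFPowerSeriesOnBall_one_sub_cpow_neg a
  simpa [mul_comm] using FormalMultilinearSeries.summable_norm_apply _ (x := z)
    (Metric.eball_subset_eball hp.r_le (by simpa [← ofReal_norm] using hz))

theorem re_add_natCast_pos {s : ℂ} (hs : 0 < s.re) (n : ℕ) : 0 < (s + n).re := by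
  simpa using add_pos_of_pos_of_nonneg hs n.cast_nonneg

theorem Gamma_add_nat_of_re_pos {s : ℂ} (hs : 0 < s.re) (n : ℕ) :
    Gamma (s + n) = (ascPochhammer ℂ n).eval s * Gamma s := by
  rw [← Gamma_add_nat_div_Gamma_eq, div_mul_cancel₀ _ (Gamma_ne_zero_of_re_pos hs)]
  rintro k rfl
  simp only [neg_re, natCast_re, Left.neg_pos_iff] at hs
  linarith [k.cast_nonneg (α := ℝ)]

theorem ascPochhammer_eval_ne_zero_of_re_pos {s : ℂ} (hs : 0 < s.re) (n : ℕ) :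
    (ascPochhammer ℂ n).eval s ≠ 0 :=
  left_ne_zero_of_mul <|
    Gamma_add_nat_of_re_pos hs n ▸ Gamma_ne_zero_of_re_pos (re_add_natCast_pos hs n)

theorem betaIntegral_add_nat {b c : ℂ} (hb : 0 < b.re) (hc : 0 < c.re) (n : ℕ) :
    betaIntegral (b + n) c =
      (ascPochhammer ℂ n).eval b / (ascPochhammer ℂ n).eval (b + c) * betaIntegral b c := by
  have hbc : 0 < (b + c).re := by simpa using add_pos hb hc
  have hbn := Gamma_mul_Gamma_eq_betaIntegral (re_add_natCast_pos hb n) hc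
  have hB := Gamma_mul_Gamma_eq_betaIntegral hb hc
  rw [show b + n + c = b + c + n by ring, Gamma_add_nat_of_re_pos hb,
    Gamma_add_nat_of_re_pos hbc] at hbn
  rw [div_mul_eq_mul_div, eq_div_iff (ascPochhammer_eval_ne_zero_of_re_pos hbc n)]
  refine mul_left_cancel₀ (Gamma_ne_zero_of_re_pos hbc) ?_
  linear_combination (ascPochhammer ℂ n).eval b * hB - hbn

theorem Gamma_add_div_mul_betaIntegral {b c : ℂ} (hb : 0 < b.re) (hc : 0 < c.re) :
    Gamma (b + c) / (Gamma b * Gamma c) * betaIntegral b c = 1 := by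
  have hne := mul_ne_zero (Gamma_ne_zero_of_re_pos hb) (Gamma_ne_zero_of_re_pos hc)
  rw [Gamma_mul_Gamma_eq_betaIntegral hb hc] at hne ⊢
  rw [div_mul_eq_mul_div, div_self hne]

theorem setIntegral_Ioc_mul_pow_eq_betaIntegral (b c : ℂ) (n : ℕ) :
    ∫ u in Set.Ioc (0 : ℝ) 1, (u : ℂ) ^ (b - 1) * (1 - (u : ℂ)) ^ (c - 1) * (u : ℂ) ^ n =
      betaIntegral (b + n) c := by
  rw [betaIntegral, intervalIntegral.integral_of_le zero_le_one]
  refine setIntegral_congr_fun measurableSet_Ioc fun u hu ↦ ?_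
  rw [show b + n - 1 = b - 1 + n by ring, cpow_add _ _ (ofReal_ne_zero.2 hu.1.ne'),
    cpow_natCast]
  ring

end Complex

/-- Euler's integral representation of the Gauss hypergeometric function. -/
theorem gaussHyp_euler_integral (α β γ x : ℂ) (hβ : 0 < β.re) (hγβ : 0 < (γ - β).re)
    (hx : ‖x‖ < 1) :
    gaussHyp α β γ x =
      (Complex.Gamma γ / (Complex.Gamma β * Complex.Gamma (γ - β))) *
        ∫ u in (0 : ℝ)..1,
          (u : ℂ) ^ (β - 1) * ((1 : ℂ) - u) ^ (γ - β - 1) * (1 - x * u) ^ (-α) := by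
  set c : ℕ → ℂ := fun n ↦ (ascPochhammer ℂ n).eval α / n ! * x ^ n
  have hexpand : ∀ u ∈ Set.Ioc (0 : ℝ) 1, (1 - x * u) ^ (-α) = ∑' n, c n * (u : ℂ) ^ n := by
    intro u hu
    have hxu : ‖x * u‖ < 1 := by
      simpa [abs_of_pos hu.1] using mul_lt_one_of_nonneg_of_lt_one_left (norm_nonneg x) hx hu.2
    simp_rw [← (hasSum_ascPochhammer_mul_pow α hxu).tsum_eq, c, mul_pow, mul_assoc]
  have hintegral : (∫ u in (0 : ℝ)..1,
      (u : ℂ) ^ (β - 1) * ((1 : ℂ) - u) ^ (γ - β - 1) * (1 - x * u) ^ (-α)) =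
      ∑' n, c n * betaIntegral (β + n) (γ - β) := by
    rw [intervalIntegral.integral_of_le zero_le_one,
      setIntegral_congr_fun measurableSet_Ioc fun u hu ↦ by rw [hexpand u hu],
      integral_mul_tsum_mul_pow (betaIntegral_convergent hβ hγβ).1
        continuous_ofReal.aestronglyMeasurable
        (ae_restrict_of_forall_mem measurableSet_Ioc fun u hu ↦ by simp [abs_of_pos hu.1, hu.2])
        (summable_norm_ascPochhammer_mul_pow α hx)]
    simp only [setIntegral_Ioc_mul_pow_eq_betaIntegral, c]
  rw [hintegral, gaussHyp, ← tsum_mul_left]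
  refine tsum_congr fun n ↦ ?_
  rw [betaIntegral_add_nat hβ hγβ, add_sub_cancel]
  have hB := add_sub_cancel β γ ▸ Gamma_add_div_mul_betaIntegral hβ hγβ
  refine (mul_one _).symm.trans ?_
  rw [← hB]
  ring
end
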